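/- arXiv:2303.08582 — 3 statements merged into one kernel-verified Lean document; each statement's English description precedes it below -/
import Mathlib

section
/- For a symmetric positive semidefinite n×n matrix L, the sum of its c smallest eigenvalues equals the minimum of Tr(Fᵀ L F) over all n×c matrices F with orthonormal columns: Σ_{i=1}^{c} σᵢ(L) = min_{F ∈ ℝ^{n×c}, FᵀF = I} Tr(Fᵀ L F). -/
open Matrix

/-- The eigenvalues of a real symmetric matrix, sorted in nondecreasing order. -/
noncomputable def sortedEigenvalues {n : ℕ} {L : Matrix (Fin n) (Fin n) ℝ}
    (hL : L.IsHermitian) : Fin n → ℝ :=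
  hL.eigenvalues ∘ Tuple.sort hL.eigenvalues

lemma traceDiag {n c : ℕ} (lam : Fin n → ℝ) (G : Matrix (Fin n) (Fin c) ℝ) :
    (Gᵀ * diagonal lam * G).trace = ∑ k, lam k * ∑ j, (G k j)^2 := by
  simp only [Matrix.trace, Matrix.diag_apply, Matrix.mul_apply, Matrix.diagonal_apply,
    Matrix.transpose_apply, ite_mul, zero_mul, mul_ite, mul_zero, Finset.sum_ite_eq,
    Finset.sum_ite_eq', Finset.mem_univ, if_true]
  rw [Finset.sum_comm]
  simp only [Finset.mul_sum]
  exact Finset.sum_congr rfl fun k _ => Finset.sum_congr rfl fun j _ => by ring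

lemma rowSq_le_one {n c : ℕ} (G : Matrix (Fin n) (Fin c) ℝ)
    (hG : Gᵀ * G = 1) (k : Fin n) : ∑ j, (G k j)^2 ≤ 1 := by
  set P := G * Gᵀ with hP
  have hPP : P * P = P := by
    rw [hP, Matrix.mul_assoc G Gᵀ (G * Gᵀ), ← Matrix.mul_assoc Gᵀ G Gᵀ, hG, Matrix.one_mul]
  have hsym : ∀ a b, P a b = P b a := by
    intro a b; simp [hP, Matrix.mul_apply, mul_comm]
  have hdiag : P k k = ∑ j, (G k j)^2 := by
    simp [hP, Matrix.mul_apply, pow_two]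
  have h2 : P k k = ∑ j, (P k j)^2 := by
    conv_lhs => rw [← hPP]
    rw [Matrix.mul_apply]
    exact Finset.sum_congr rfl fun j _ => by rw [hsym j k, pow_two]
  have hge : (P k k)^2 ≤ P k k := by
    conv_rhs => rw [h2]
    exact Finset.single_le_sum (f := fun j => (P k j)^2) (fun j _ => sq_nonneg _) (Finset.mem_univ k)
  have h0 : 0 ≤ P k k := by rw [hdiag]; positivity
  nlinarith [hge, h0, hdiag]


/-- **Ky Fan's theorem.** For a symmetric PSD matrix `L`, the sum of the `c` smallest
eigenvalues equals the minimum of `Tr(Fᵀ L F)` over `n × c` matrices `F` with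
orthonormal columns (`Fᵀ F = I`). -/
theorem kyFan_sum_smallest_eigenvalues (n c : ℕ) (hc : c ≤ n)
    (L : Matrix (Fin n) (Fin n) ℝ) (hL : L.PosSemidef) :
    IsLeast
      {t : ℝ | ∃ F : Matrix (Fin n) (Fin c) ℝ,
        Fᵀ * F = (1 : Matrix (Fin c) (Fin c) ℝ) ∧ t = (Fᵀ * L * F).trace}
      (∑ i : Fin c, sortedEigenvalues hL.isHermitian (Fin.castLE hc i)) := by
  set hH := hL.isHermitian with hHdef
  set lam : Fin n → ℝ := hH.eigenvalues with hlamdef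
  set U : Matrix (Fin n) (Fin n) ℝ :=
    (Matrix.IsHermitian.eigenvectorUnitary hH : Matrix (Fin n) (Fin n) ℝ) with hUdef
  have hstar : star U = Uᵀ := by
    rw [Matrix.star_eq_conjTranspose, Matrix.conjTranspose_eq_transpose_of_trivial]
  have hUU : Uᵀ * U = 1 := by
    rw [← hstar]
    exact mem_unitaryGroup_iff'.mp (Matrix.IsHermitian.eigenvectorUnitary hH).2
  have hUUt : U * Uᵀ = 1 := by
    rw [← hstar]
    exact mem_unitaryGroup_iff.mp (Matrix.IsHermitian.eigenvectorUnitary hH).2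
  have hofReal : (RCLike.ofReal ∘ lam : Fin n → ℝ) = lam := by
    rw [RCLike.ofReal_real_eq_id, Function.id_comp]
  have hspec : L = U * diagonal lam * Uᵀ := by
    have h := hH.spectral_theorem
    rw [Unitary.conjStarAlgAut_apply, ← hUdef, hstar, hofReal] at h
    exact h
  -- the key trace formula
  have htr : ∀ F : Matrix (Fin n) (Fin c) ℝ,
      (Fᵀ * L * F).trace = ∑ k, lam k * ∑ j, ((Uᵀ * F) k j)^2 := by
    intro F
    rw [hspec]
    have hass : Fᵀ * (U * diagonal lam * Uᵀ) * F
        = (Uᵀ * F)ᵀ * diagonal lam * (Uᵀ * F) := by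
      simp only [Matrix.transpose_mul, Matrix.transpose_transpose, Matrix.mul_assoc]
    rw [hass, traceDiag]
  set emb : Fin c → Fin n := fun i => (Tuple.sort lam) (Fin.castLE hc i) with hembdef
  have hinj : Function.Injective emb :=
    fun a b h => Fin.castLE_injective hc ((Tuple.sort lam).injective h)
  set S : Finset (Fin n) := Finset.image emb Finset.univ with hSdef
  have hScard : S.card = c := by
    rw [hSdef, Finset.card_image_of_injective _ hinj, Finset.card_univ, Fintype.card_fin]
  have hmono : Monotone (lam ∘ Tuple.sort lam) := Tuple.monotone_sort lam
  have htarget : (∑ i : Fin c, sortedEigenvalues hH (Fin.castLE hc i))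
      = ∑ i : Fin c, lam (emb i) := by
    simp only [sortedEigenvalues, Function.comp_apply, hembdef, hlamdef]
  constructor
  · -- membership
    set F0 : Matrix (Fin n) (Fin c) ℝ := Matrix.of (fun i j => U i (emb j)) with hF0def
    have hF0 : ∀ i j, F0 i j = U i (emb j) := fun i j => rfl
    refine ⟨F0, ?_, ?_⟩
    · ext j j'
      have h1 := congrFun (congrFun hUU (emb j)) (emb j')
      simp only [Matrix.mul_apply, Matrix.transpose_apply, Matrix.one_apply, hF0] at h1 ⊢
      rw [h1]
      simp [hinj.eq_iff]
    · rw [htr, htarget]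
      have hG : ∀ (k : Fin n) (j : Fin c),
          (Uᵀ * F0) k j = if k = emb j then 1 else 0 := by
        intro k j
        have h1 := congrFun (congrFun hUU k) (emb j)
        simp only [Matrix.mul_apply, Matrix.transpose_apply, Matrix.one_apply, hF0] at h1 ⊢
        exact h1
      have hsq : ∀ (k : Fin n) (j : Fin c),
          ((Uᵀ * F0) k j)^2 = if k = emb j then 1 else 0 := by
        intro k j; rw [hG]; split <;> norm_num
      calc ∑ i : Fin c, lam (emb i)
          = ∑ j : Fin c, ∑ k : Fin n, (if k = emb j then lam k else 0) := by
            refine Finset.sum_congr rfl fun j _ => ?_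
            rw [Finset.sum_ite_eq' Finset.univ (emb j) lam]
            simp
        _ = ∑ k : Fin n, ∑ j : Fin c, (if k = emb j then lam k else 0) := Finset.sum_comm
        _ = ∑ k : Fin n, lam k * ∑ j : Fin c, ((Uᵀ * F0) k j)^2 := by
            refine Finset.sum_congr rfl fun k _ => ?_
            rw [Finset.mul_sum]
            refine Finset.sum_congr rfl fun j _ => ?_
            rw [hsq]
            split <;> simp
  · -- lower bound
    rintro x ⟨F, hF, rfl⟩
    set G : Matrix (Fin n) (Fin c) ℝ := Uᵀ * F with hGdef
    have hGtG : Gᵀ * G = 1 := by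
      rw [hGdef, Matrix.transpose_mul, Matrix.transpose_transpose,
        Matrix.mul_assoc, ← Matrix.mul_assoc U Uᵀ F, hUUt, Matrix.one_mul, hF]
    set s : Fin n → ℝ := fun k => ∑ j, (G k j)^2 with hsdef
    have hs0 : ∀ k, 0 ≤ s k := fun k => Finset.sum_nonneg fun j _ => sq_nonneg _
    have hs1 : ∀ k, s k ≤ 1 := fun k => rowSq_le_one G hGtG k
    have hssum : ∑ k, s k = c := by
      calc ∑ k, s k = ∑ j, ∑ k, (G k j)^2 := Finset.sum_comm
        _ = (Gᵀ * G).trace := by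
            simp [Matrix.trace, Matrix.mul_apply, pow_two]
        _ = c := by rw [hGtG]; simp
    set t : Fin n → ℝ := fun k => if k ∈ S then 1 else 0 with htdef
    have htsum : ∑ k, t k = c := by
      simp only [htdef, Finset.sum_ite_mem, Finset.univ_inter, Finset.sum_const, nsmul_eq_mul,
        mul_one, hScard]
    have hlamt : ∑ k, lam k * t k = ∑ i : Fin c, lam (emb i) := by
      simp only [htdef, mul_ite, mul_one, mul_zero]
      rw [Finset.sum_ite_mem, Finset.univ_inter, hSdef,
        Finset.sum_image (fun a _ b _ h => hinj h)]
    rw [htr F, htarget]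
    rcases Nat.eq_zero_or_pos c with hc0 | hcpos
    · subst hc0
      simp only [Finset.univ_eq_empty, Finset.sum_empty]
      exact Finset.sum_nonneg fun k _ => mul_nonneg (hL.eigenvalues_nonneg k) (hs0 k)
    · set θ : ℝ := lam (Tuple.sort lam (Fin.castLE hc ⟨c - 1, by omega⟩)) with hθdef
      have hθS : ∀ k ∈ S, lam k ≤ θ := by
        intro k hk
        rw [hSdef, Finset.mem_image] at hk
        obtain ⟨i, -, rfl⟩ := hk
        exact hmono (show Fin.castLE hc i ≤ Fin.castLE hc ⟨c - 1, by omega⟩ from by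
          simp only [Fin.le_def, Fin.coe_castLE]; omega)
      have hθout : ∀ k ∉ S, θ ≤ lam k := by
        intro k hk
        set m : Fin n := (Tuple.sort lam).symm k with hmdef
        have hkm : k = Tuple.sort lam m := ((Tuple.sort lam).apply_symm_apply k).symm
        have hmge : c ≤ (m : ℕ) := by
          by_contra hlt
          push_neg at hlt
          apply hk
          rw [hSdef, Finset.mem_image]
          refine ⟨⟨(m : ℕ), hlt⟩, Finset.mem_univ _, ?_⟩
          have hcast : Fin.castLE hc ⟨(m : ℕ), hlt⟩ = m := Fin.ext rfl
          show (Tuple.sort lam) (Fin.castLE hc ⟨(m : ℕ), hlt⟩) = k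
          rw [hcast]
          exact hkm.symm
        rw [hkm]
        exact hmono (show Fin.castLE hc ⟨c - 1, by omega⟩ ≤ m from by
          simp only [Fin.le_def, Fin.coe_castLE]; omega)
      have hpt : ∀ k, 0 ≤ (lam k - θ) * (s k - t k) := by
        intro k
        by_cases hk : k ∈ S
        · have h1 := hθS k hk
          have h2 := hs1 k
          simp only [htdef, hk, if_pos]
          nlinarith
        · have h1 := hθout k hk
          have h2 := hs0 k
          simp only [htdef, hk, if_neg, not_false_iff]
          nlinarith
      have hnn : (0:ℝ) ≤ ∑ k, (lam k - θ) * (s k - t k) :=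
        Finset.sum_nonneg fun k _ => hpt k
      have hexpand : ∑ k, (lam k - θ) * (s k - t k)
          = (∑ k, lam k * s k) - (∑ k, lam k * t k) - θ * (∑ k, s k) + θ * (∑ k, t k) := by
        rw [Finset.mul_sum, Finset.mul_sum, ← Finset.sum_sub_distrib, ← Finset.sum_sub_distrib,
          ← Finset.sum_add_distrib]
        exact Finset.sum_congr rfl fun k _ => by ring
      rw [← hlamt]
      have : (∑ k, lam k * s k) - (∑ k, lam k * t k) ≥ 0 := by
        rw [hssum, htsum] at hexpand
        linarith
      linarith
end

section
/- Every third-order tensor 𝒳 ∈ ℝ^{N₁×N₂×N₃} admits a t-SVD factorization 𝒳 = 𝒰 * 𝒮 * 𝒱ᵀ, where 𝒰 ∈ ℝ^{N₁×N₁×N₃} and 𝒱 ∈ ℝ^{N₂×N₂×N₃} are orthogonal tensors (𝒰ᵀ*𝒰 = ℐ, 𝒱ᵀ*𝒱 = ℐ) and 𝒮 ∈ ℝ^{N₁×N₂×N₃} is f-diagonal (each frontal slice is diagonal). -/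
open Matrix

/-- A third-order `N₁ × N₂ × N₃` real tensor, given by its `N₃` frontal slices. -/
def Tensor3 (N₁ N₂ N₃ : ℕ) := Fin N₃ → Matrix (Fin N₁) (Fin N₂) ℝ

/-- The t-product, written slice-wise: the `k`-th frontal slice of `𝒜 * ℬ` is
`Σⱼ A^{(k−j)} B^{(j)}` (indices mod `N₃`, 0-indexed). -/
def tProd {N₁ N₂ L N₃ : ℕ} (A : Tensor3 N₁ N₂ N₃) (B : Tensor3 N₂ L N₃) :
    Tensor3 N₁ L N₃ :=
  fun k => ∑ j : Fin N₃, A (k - j) * B j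

/-- The tensor transpose: transpose each frontal slice and reverse the order of
slices `2` through `N₃`. -/
def tTranspose {N₁ N₂ N₃ : ℕ} (A : Tensor3 N₁ N₂ N₃) : Tensor3 N₂ N₁ N₃ :=
  fun k => (A (-k))ᵀ

/-- The identity tensor: first frontal slice is `I_N`, remaining slices are zero. -/
def idTensor (N N₃ : ℕ) : Tensor3 N N N₃ :=
  fun k => if (k : ℕ) = 0 then (1 : Matrix (Fin N) (Fin N) ℝ) else 0

/-- A tensor is orthogonal if `𝒰ᵀ * 𝒰 = 𝒰 * 𝒰ᵀ = ℐ`. -/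
def IsOrthogonalTensor {N N₃ : ℕ} (U : Tensor3 N N N₃) : Prop :=
  tProd (tTranspose U) U = idTensor N N₃ ∧ tProd U (tTranspose U) = idTensor N N₃

namespace TSVDaux

section SVD

open scoped ComplexOrder

variable {𝕜 : Type} [RCLike 𝕜]


private lemma sum_conj_mul_eq_zero {m : ℕ} (f : Fin m → 𝕜)
    (h : ∑ p, star (f p) * f p = 0) : ∀ p, f p = 0 := by
  have h2 : ((∑ p, ‖f p‖ ^ 2 : ℝ) : 𝕜) = 0 := by
    rw [RCLike.ofReal_sum, ← h]
    refine Finset.sum_congr rfl fun p _ => ?_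
    push_cast
    rw [← RCLike.conj_mul]; rfl
  have h' : ∑ p, (‖f p‖ ^ 2 : ℝ) = 0 := by exact_mod_cast h2
  intro p
  have h3 := (Finset.sum_eq_zero_iff_of_nonneg
    (fun i _ => by positivity)).mp h' p (Finset.mem_univ p)
  have h4 : ‖f p‖ = 0 := by nlinarith [norm_nonneg (f p)]
  simpa using h4

private noncomputable def colE {m n : ℕ} (C : Matrix (Fin m) (Fin n) 𝕜) (q : Fin n) :
    EuclideanSpace 𝕜 (Fin m) :=
  (WithLp.equiv 2 (Fin m → 𝕜)).symm (fun p => C p q)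

private lemma inner_col {m n : ℕ} (C : Matrix (Fin m) (Fin n) 𝕜) (μ : Fin n → ℝ)
    (hC : Cᴴ * C = Matrix.diagonal (fun q => (μ q : 𝕜))) (q q' : Fin n) :
    (inner 𝕜 (colE C q) (colE C q') : 𝕜) = if q = q' then (μ q : 𝕜) else 0 := by
  have h := congrFun (congrFun hC q) q'
  simp only [Matrix.mul_apply, Matrix.conjTranspose_apply, Matrix.diagonal_apply] at h
  simp only [PiLp.inner_apply, colE, WithLp.equiv_symm_apply, PiLp.toLp_apply, starRingEnd_apply]
  rw [← h]; exact Finset.sum_congr rfl fun _ _ => mul_comm _ _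

private lemma exists_unitary_factor {m n : ℕ} (C : Matrix (Fin m) (Fin n) 𝕜) (μ : Fin n → ℝ)
    (hμ0 : ∀ q, 0 ≤ μ q)
    (hC : Cᴴ * C = Matrix.diagonal (fun q => (μ q : 𝕜)))
    (hr : ∀ q : Fin n, μ q ≠ 0 → (q : ℕ) < m) :
    ∃ U ∈ Matrix.unitaryGroup (Fin m) 𝕜,
      C = U * Matrix.of (fun (p : Fin m) (q : Fin n) =>
        if (p : ℕ) = (q : ℕ) then ((Real.sqrt (μ q) : ℝ) : 𝕜) else 0) := by
  classical
  have hz : ∀ q : Fin n, μ q = 0 → ∀ p, C p q = 0 := by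
    intro q hq p
    have h0 : ∑ p, star (C p q) * C p q = 0 := by
      have h := congrFun (congrFun hC q) q
      simp only [Matrix.mul_apply, Matrix.conjTranspose_apply, Matrix.diagonal_apply_eq] at h
      rw [h, hq]; simp
    exact sum_conj_mul_eq_zero _ h0 p
  set sSet : Set (Fin m) := {p | ∃ h : (p : ℕ) < n, μ (⟨p, h⟩ : Fin n) ≠ 0} with hsSet
  set v : Fin m → EuclideanSpace 𝕜 (Fin m) := fun p =>
    if h : (p : ℕ) < n then (((Real.sqrt (μ ⟨p, h⟩))⁻¹ : ℝ) : 𝕜) • colE C ⟨p, h⟩ else 0 with hv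
  have honv : Orthonormal 𝕜 (sSet.restrict v) := by
    rw [orthonormal_iff_ite]
    rintro ⟨p, hp1, hp2⟩ ⟨p', hp1', hp2'⟩
    simp only [Set.restrict, Set.domRestrict_apply, hv, dif_pos hp1, dif_pos hp1']
    rw [inner_smul_left, inner_smul_right, inner_col C μ hC]
    by_cases hpp : (⟨p, hp1⟩ : Fin n) = ⟨p', hp1'⟩
    · have hpe : p = p' := by simpa [Fin.ext_iff] using hpp
      subst hpe
      rw [if_pos rfl, if_pos (by exact Subtype.ext rfl)]
      rw [RCLike.conj_ofReal]
      have hsq : Real.sqrt (μ ⟨p, hp1⟩) * Real.sqrt (μ ⟨p, hp1⟩) = μ ⟨p, hp1⟩ :=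
        Real.mul_self_sqrt (hμ0 _)
      have hs0 : Real.sqrt (μ ⟨p, hp1⟩) ≠ 0 := by
        intro h0
        rw [h0] at hsq
        exact hp2 (by linarith)
      have : ((Real.sqrt (μ ⟨p, hp1⟩))⁻¹ * ((Real.sqrt (μ ⟨p, hp1⟩))⁻¹ * μ ⟨p, hp1⟩) : ℝ) = 1 := by
        have h1 : ((Real.sqrt (μ ⟨p, hp1⟩))⁻¹ * ((Real.sqrt (μ ⟨p, hp1⟩))⁻¹ * μ ⟨p, hp1⟩) : ℝ)
            = μ ⟨p, hp1⟩ / (Real.sqrt (μ ⟨p, hp1⟩) * Real.sqrt (μ ⟨p, hp1⟩)) := by ring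
        rw [h1, hsq, div_self hp2]
      calc (((Real.sqrt (μ ⟨p, hp1⟩))⁻¹ : ℝ) : 𝕜) * ((((Real.sqrt (μ ⟨p, hp1⟩))⁻¹ : ℝ) : 𝕜) * ((μ ⟨p, hp1⟩ : ℝ) : 𝕜))
          = (((Real.sqrt (μ ⟨p, hp1⟩))⁻¹ * ((Real.sqrt (μ ⟨p, hp1⟩))⁻¹ * μ ⟨p, hp1⟩) : ℝ) : 𝕜) := by
            push_cast; ring
        _ = 1 := by rw [this]; simp
    · have hne : ¬ ((⟨p, hp1, hp2⟩ : sSet) = ⟨p', hp1', hp2'⟩) := by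
        intro h
        apply hpp
        have : p = p' := by simpa using congrArg Subtype.val h
        subst this; rfl
      rw [if_neg hpp, if_neg hne]
      simp
  obtain ⟨b, hb⟩ := honv.exists_orthonormalBasis_extension_of_card_eq
    (by simpa using finrank_euclideanSpace_fin (𝕜 := 𝕜) (n := m))
  refine ⟨(EuclideanSpace.basisFun (Fin m) 𝕜).toBasis.toMatrix b.toBasis,
    (EuclideanSpace.basisFun (Fin m) 𝕜).toMatrix_orthonormalBasis_mem_unitary b, ?_⟩
  have hUapp : ∀ p k, (EuclideanSpace.basisFun (Fin m) 𝕜).toBasis.toMatrix b.toBasis p k = b k p :=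
    fun p k => rfl
  ext p q
  rw [Matrix.mul_apply]
  by_cases hq : (q : ℕ) < m
  · have hsum : ∀ k : Fin m, k ≠ ⟨q, hq⟩ →
        (EuclideanSpace.basisFun (Fin m) 𝕜).toBasis.toMatrix b.toBasis p k *
          Matrix.of (fun (p : Fin m) (q : Fin n) =>
            if (p : ℕ) = (q : ℕ) then ((Real.sqrt (μ q) : ℝ) : 𝕜) else 0) k q = 0 := by
      intro k hk
      have hkq : ¬ ((k : ℕ) = (q : ℕ)) := fun h => hk (Fin.ext h)
      simp [hkq]
    rw [Finset.sum_eq_single ⟨q, hq⟩ (fun k _ hk => hsum k hk) (by simp)]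
    by_cases hμ : μ q = 0
    · simp [hμ, hz q hμ p]
    · have hq' : ((⟨(q : ℕ), hq⟩ : Fin m) : ℕ) < n := q.isLt
      have hqq : (⟨((⟨(q : ℕ), hq⟩ : Fin m) : ℕ), hq'⟩ : Fin n) = q := Fin.ext rfl
      have hmem : (⟨(q : ℕ), hq⟩ : Fin m) ∈ sSet := ⟨hq', by rw [hqq]; exact hμ⟩
      rw [hUapp, hb _ hmem]
      simp only [hv, dif_pos hq', hqq]
      have hsq : Real.sqrt (μ q) ≠ 0 := by
        have := Real.sqrt_pos.mpr (lt_of_le_of_ne (hμ0 q) (Ne.symm hμ))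
        linarith
      have hsqK : ((Real.sqrt (μ q) : ℝ) : 𝕜) ≠ 0 := by exact_mod_cast hsq
      simp only [PiLp.smul_apply, smul_eq_mul, Matrix.of_apply, colE,
        WithLp.equiv_symm_apply, PiLp.toLp_apply, if_pos (show ((⟨(q : ℕ), hq⟩ : Fin m) : ℕ) = (q : ℕ) from rfl)]
      rw [RCLike.ofReal_inv]
      field_simp
      simp
  · have hterm : ∀ k : Fin m, (EuclideanSpace.basisFun (Fin m) 𝕜).toBasis.toMatrix b.toBasis p k *
        Matrix.of (fun (p : Fin m) (q : Fin n) =>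
          if (p : ℕ) = (q : ℕ) then ((Real.sqrt (μ q) : ℝ) : 𝕜) else 0) k q = 0 := by
      intro k
      have hkq : ¬ ((k : ℕ) = (q : ℕ)) := fun h => hq (h ▸ k.isLt)
      simp [hkq]
    rw [Finset.sum_eq_zero (fun k _ => hterm k)]
    have hμ : μ q = 0 := by
      by_contra hμ
      exact hq (hr q hμ)
    exact hz q hμ p

private lemma card_nonzero_le {m n : ℕ} (C : Matrix (Fin m) (Fin n) 𝕜) (μ : Fin n → ℝ)
    (hμ0 : ∀ q, 0 ≤ μ q)
    (hC : Cᴴ * C = Matrix.diagonal (fun q => (μ q : 𝕜))) :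
    Fintype.card {q : Fin n // μ q ≠ 0} ≤ m := by
  classical
  set w : {q : Fin n // μ q ≠ 0} → EuclideanSpace 𝕜 (Fin m) := fun q =>
    (((Real.sqrt (μ q))⁻¹ : ℝ) : 𝕜) • colE C q with hw
  have honv : Orthonormal 𝕜 w := by
    rw [orthonormal_iff_ite]
    rintro ⟨q, hq⟩ ⟨q', hq'⟩
    simp only [hw]
    rw [inner_smul_left, inner_smul_right, inner_col C μ hC, RCLike.conj_ofReal]
    by_cases hqq : q = q'
    · subst hqq
      rw [if_pos rfl, if_pos rfl]
      have hsq : Real.sqrt (μ q) * Real.sqrt (μ q) = μ q := Real.mul_self_sqrt (hμ0 _)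
      have key : ((Real.sqrt (μ q))⁻¹ * ((Real.sqrt (μ q))⁻¹ * μ q) : ℝ) = 1 := by
        have h1 : ((Real.sqrt (μ q))⁻¹ * ((Real.sqrt (μ q))⁻¹ * μ q) : ℝ)
            = μ q / (Real.sqrt (μ q) * Real.sqrt (μ q)) := by ring
        rw [h1, hsq, div_self hq]
      calc (((Real.sqrt (μ q))⁻¹ : ℝ) : 𝕜) * ((((Real.sqrt (μ q))⁻¹ : ℝ) : 𝕜) * ((μ q : ℝ) : 𝕜))
          = (((Real.sqrt (μ q))⁻¹ * ((Real.sqrt (μ q))⁻¹ * μ q) : ℝ) : 𝕜) := by push_cast; ring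
        _ = 1 := by rw [key]; simp
    · rw [if_neg hqq, if_neg (fun h => hqq (by simpa using congrArg Subtype.val h))]
      simp
  have hli := honv.linearIndependent.fintype_card_le_finrank
  simpa [finrank_euclideanSpace_fin] using hli

private def finLtEquiv {n r : ℕ} (h : r ≤ n) : {i : Fin n // (i : ℕ) < r} ≃ Fin r where
  toFun i := ⟨i.1, i.2⟩
  invFun j := ⟨⟨j.1, lt_of_lt_of_le j.2 h⟩, j.2⟩
  left_inv i := Subtype.ext (Fin.ext rfl)
  right_inv j := rfl

private lemma svd_exists {m n : ℕ} (A : Matrix (Fin m) (Fin n) 𝕜) :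
    ∃ U ∈ Matrix.unitaryGroup (Fin m) 𝕜, ∃ V ∈ Matrix.unitaryGroup (Fin n) 𝕜,
      ∃ S : Matrix (Fin m) (Fin n) 𝕜,
        (∀ (p : Fin m) (q : Fin n), (p : ℕ) ≠ (q : ℕ) → S p q = 0) ∧ A = U * S * Vᴴ := by
  classical
  have hB : (Aᴴ * A).IsHermitian := Matrix.isHermitian_conjTranspose_mul_self A
  set lam : Fin n → ℝ := hB.eigenvalues with hlam
  have hlam0 : ∀ q, 0 ≤ lam q := fun q =>
    (Matrix.posSemidef_conjTranspose_mul_self A).eigenvalues_nonneg q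
  set W : Matrix (Fin n) (Fin n) 𝕜 := (hB.eigenvectorUnitary : Matrix (Fin n) (Fin n) 𝕜) with hW
  have hWdiag : (star W) * (Aᴴ * A) * W = Matrix.diagonal (RCLike.ofReal ∘ lam) :=
    by have := hB.conjStarAlgAut_star_eigenvectorUnitary; rwa [Unitary.conjStarAlgAut_apply, Unitary.coe_star, star_star] at this
  set C0 := A * W with hC0
  have hC0d : C0ᴴ * C0 = Matrix.diagonal (fun q => (lam q : 𝕜)) := by
    rw [hC0, Matrix.conjTranspose_mul]
    have h1 : Wᴴ * Aᴴ * (A * W) = (star W) * (Aᴴ * A) * W := by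
      rw [Matrix.star_eq_conjTranspose]
      simp only [Matrix.mul_assoc]
    rw [h1, hWdiag]
    rfl
  set r := Fintype.card {q : Fin n // lam q ≠ 0} with hrdef
  have hrm : r ≤ m := card_nonzero_le C0 lam hlam0 hC0d
  have hrn : r ≤ n := by
    rw [hrdef]
    simpa using Fintype.card_subtype_le (fun q : Fin n => lam q ≠ 0)
  have hcard_lt : Fintype.card {q : Fin n // (q : ℕ) < r} = r := by
    rw [Fintype.card_congr (finLtEquiv hrn), Fintype.card_fin]
  have hcard_compl : Fintype.card {q : Fin n // ¬ ((q : ℕ) < r)}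
      = Fintype.card {q : Fin n // ¬ (lam q ≠ 0)} := by
    rw [Fintype.card_subtype_compl, Fintype.card_subtype_compl, hcard_lt, ← hrdef]
  set g : {q : Fin n // (q : ℕ) < r} ≃ {q : Fin n // lam q ≠ 0} :=
    (finLtEquiv hrn).trans (Fintype.equivFinOfCardEq hrdef.symm).symm with hg
  set gc : {q : Fin n // ¬ ((q : ℕ) < r)} ≃ {q : Fin n // ¬ (lam q ≠ 0)} :=
    Fintype.equivOfCardEq hcard_compl with hgc
  set π : Equiv.Perm (Fin n) := Equiv.subtypeCongr g gc with hπ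
  have hπ_left : ∀ (q : Fin n) (h : (q : ℕ) < r), π q = (g ⟨q, h⟩ : Fin n) := by
    intro q h
    simp [hπ, Equiv.subtypeCongr, Equiv.sumCompl_symm_apply_of_pos,
      Equiv.sumCompl_symm_apply_of_neg, h]
  have hπ_right : ∀ (q : Fin n) (h : ¬ ((q : ℕ) < r)), π q = (gc ⟨q, h⟩ : Fin n) := by
    intro q h
    simp [hπ, Equiv.subtypeCongr, Equiv.sumCompl_symm_apply_of_pos,
      Equiv.sumCompl_symm_apply_of_neg, h]
  have hπ_prop : ∀ q : Fin n, lam (π q) ≠ 0 ↔ (q : ℕ) < r := by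
    intro q
    by_cases h : (q : ℕ) < r
    · rw [hπ_left q h]
      exact ⟨fun _ => h, fun _ => (g ⟨q, h⟩).2⟩
    · rw [hπ_right q h]
      constructor
      · intro hne
        exact absurd hne (gc ⟨q, h⟩).2
      · intro hlt
        exact absurd hlt h
  set μ : Fin n → ℝ := fun q => lam (π q) with hμ
  set Vb := hB.eigenvectorBasis.reindex π.symm with hVb
  set V := (EuclideanSpace.basisFun (Fin n) 𝕜).toBasis.toMatrix Vb.toBasis with hVdef
  have hVmem : V ∈ Matrix.unitaryGroup (Fin n) 𝕜 :=
    (EuclideanSpace.basisFun (Fin n) 𝕜).toMatrix_orthonormalBasis_mem_unitary Vb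
  have hVapp : ∀ i j, V i j = W i (π j) := by
    intro i j
    have h1 : V i j = (Vb j) i := rfl
    rw [h1, hVb, OrthonormalBasis.reindex_apply, Equiv.symm_symm]
    rw [hW, Matrix.IsHermitian.eigenvectorUnitary_apply]
  set C := A * V with hCdef
  have hCepq : ∀ p q, C p q = C0 p (π q) := by
    intro p q
    simp [hCdef, hC0, Matrix.mul_apply, hVapp]
  have hCd : Cᴴ * C = Matrix.diagonal (fun q => (μ q : 𝕜)) := by
    ext q q'
    have h0 := congrFun (congrFun hC0d (π q)) (π q')
    simp only [Matrix.mul_apply, Matrix.conjTranspose_apply, Matrix.diagonal_apply] at h0 ⊢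
    simp only [hCepq]
    rw [h0]
    by_cases h : q = q'
    · simp [h, hμ]
    · simp [h, π.injective.eq_iff, hμ]
  have hr' : ∀ q : Fin n, μ q ≠ 0 → (q : ℕ) < m := fun q hq =>
    lt_of_lt_of_le ((hπ_prop q).mp hq) hrm
  obtain ⟨U, hUmem, hUC⟩ := exists_unitary_factor C μ (fun q => hlam0 _) hCd hr'
  refine ⟨U, hUmem, V, hVmem,
    Matrix.of (fun (p : Fin m) (q : Fin n) =>
      if (p : ℕ) = (q : ℕ) then ((Real.sqrt (μ q) : ℝ) : 𝕜) else 0),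
    fun p q h => by simp [Matrix.of_apply, h], ?_⟩
  have hVV : V * Vᴴ = 1 := by
    have h2 := Matrix.mem_unitaryGroup_iff.mp hVmem
    simpa [Matrix.star_eq_conjTranspose] using h2
  calc A = A * (V * Vᴴ) := by rw [hVV, Matrix.mul_one]
    _ = (A * V) * Vᴴ := by rw [Matrix.mul_assoc]
    _ = _ := by rw [← hCdef, hUC]

end SVD

open scoped Fin.CommRing


noncomputable def ch (N : ℕ) (a : ℤ) : ℂ :=
  Complex.exp (2 * Real.pi * Complex.I * a / N)

lemma ch_add (N : ℕ) (a b : ℤ) : ch N (a + b) = ch N a * ch N b := by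
  rw [ch, ch, ch, ← Complex.exp_add]
  congr 1
  push_cast
  ring

lemma ch_zero (N : ℕ) : ch N 0 = 1 := by
  rw [ch]
  norm_num

lemma ch_int_mul (N : ℕ) (hN : N ≠ 0) (t : ℤ) : ch N (N * t) = 1 := by
  rw [ch]
  have hNC : (N : ℂ) ≠ 0 := by
    simp only [ne_eq, Nat.cast_eq_zero]
    omega
  have h1 : 2 * (Real.pi : ℂ) * Complex.I * ((N : ℤ) * t : ℤ) / N
      = t * (2 * Real.pi * Complex.I) := by
    push_cast
    field_simp
  rw [h1, Complex.exp_int_mul_two_pi_mul_I]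

lemma ch_congr (N : ℕ) (hN : N ≠ 0) {a b : ℤ} (h : a ≡ b [ZMOD N]) : ch N a = ch N b := by
  obtain ⟨t, ht⟩ := h.dvd
  have hb : b = a + N * t := by linarith
  rw [hb, ch_add, ch_int_mul N hN t, mul_one]

lemma ch_ne_one (N : ℕ) {v : ℕ} (h0 : 0 < v) (hv : v < N) : ch N v ≠ 1 := by
  rw [ch]
  intro h
  rw [Complex.exp_eq_one_iff] at h
  obtain ⟨m, hm⟩ := h
  have hNC : (N : ℂ) ≠ 0 := by
    simp only [ne_eq, Nat.cast_eq_zero]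
    omega
  have hne : (2 * (Real.pi : ℂ) * Complex.I) ≠ 0 := by
    simp [Complex.ofReal_ne_zero.mpr Real.pi_ne_zero, Complex.I_ne_zero]
  have h2 : (v : ℂ) = m * N := by
    field_simp at hm
    push_cast at hm
    linear_combination hm
  have h4 : (v : ℤ) = m * N := by exact_mod_cast h2
  have hdvd : (N : ℤ) ∣ (v : ℤ) := ⟨m, by linarith⟩
  have hdvd' : N ∣ v := by exact_mod_cast hdvd
  have := Nat.le_of_dvd h0 hdvd'
  omega

lemma ch_conj (N : ℕ) (a : ℤ) : (starRingEnd ℂ) (ch N a) = ch N (-a) := by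
  rw [ch, ch, ← Complex.exp_conj]
  congr 1
  rw [map_div₀]
  push_cast
  simp [Complex.conj_I, Complex.conj_ofReal, map_ofNat]

noncomputable def phi (n : ℕ) (x : Fin (n + 1)) : ℂ := ch (n + 1) ((x : ℕ) : ℤ)

lemma phi_add {n : ℕ} (x y : Fin (n + 1)) : phi n (x + y) = phi n x * phi n y := by
  rw [phi, phi, phi, ← ch_add]
  apply ch_congr _ (Nat.succ_ne_zero n)
  have h : ((x + y : Fin (n + 1)) : ℕ) = ((x : ℕ) + (y : ℕ)) % (n + 1) := Fin.val_add x y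
  rw [Int.ModEq, h]
  push_cast
  rw [Int.emod_emod_of_dvd _ dvd_rfl]

lemma phi_zero {n : ℕ} : phi n 0 = 1 := by
  rw [phi]
  simp [ch_zero]

lemma phi_conj {n : ℕ} (x : Fin (n + 1)) : (starRingEnd ℂ) (phi n x) = phi n (-x) := by
  rw [phi, phi, ch_conj]
  apply ch_congr _ (Nat.succ_ne_zero n)
  have h : (n + 1) ∣ (((-x : Fin (n + 1)) : ℕ) + (x : ℕ)) := by
    apply Nat.dvd_of_mod_eq_zero
    have h2 : ((-x + x : Fin (n + 1)) : ℕ) = (((-x : Fin (n + 1)) : ℕ) + (x : ℕ)) % (n + 1) :=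
      Fin.val_add _ _
    rw [← h2]
    simp
  rw [Int.modEq_iff_dvd]
  have h4 : ((n + 1 : ℕ) : ℤ) ∣ ((((-x : Fin (n + 1)) : ℕ) + (x : ℕ) : ℕ) : ℤ) := by
    exact_mod_cast h
  have h5 : ((((-x : Fin (n + 1)) : ℕ) : ℤ)) - (-((x : ℕ) : ℤ))
      = ((((-x : Fin (n + 1)) : ℕ) + (x : ℕ) : ℕ) : ℤ) := by push_cast; ring
  rw [h5]
  exact_mod_cast h4

lemma phi_ne_one {n : ℕ} {x : Fin (n + 1)} (hx : x ≠ 0) : phi n x ≠ 1 := by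
  apply ch_ne_one
  · exact Nat.pos_of_ne_zero (fun h => hx (Fin.ext h))
  · exact x.isLt

lemma sum_phi {n : ℕ} (d : Fin (n + 1)) :
    ∑ j : Fin (n + 1), phi n (j * d) = if d = 0 then ((n + 1 : ℕ) : ℂ) else 0 := by
  by_cases hd : d = 0
  · subst hd
    simp [mul_zero, phi_zero]
  · rw [if_neg hd]
    set S := ∑ j : Fin (n + 1), phi n (j * d) with hS
    have key : phi n d * S = S := by
      rw [hS, Finset.mul_sum]
      have h1 : ∀ j : Fin (n + 1), phi n d * phi n (j * d) = phi n ((j + 1) * d) := by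
        intro j
        rw [← phi_add]
        congr 1
        ring
      simp_rw [h1]
      exact Fintype.sum_equiv (Equiv.addRight 1) _ _ (fun j => rfl)
    have h2 : (phi n d - 1) * S = 0 := by ring_nf; linear_combination key
    rcases mul_eq_zero.mp h2 with h3 | h3
    · exact absurd (by linear_combination h3) (phi_ne_one hd)
    · exact h3

noncomputable def Ft {N₁ N₂ n : ℕ} (A : Tensor3 N₁ N₂ (n + 1)) (j : Fin (n + 1)) :
    Matrix (Fin N₁) (Fin N₂) ℂ :=
  Matrix.of fun p q => ∑ k, phi n (j * k) * ((A k p q : ℝ) : ℂ)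

lemma Ft_apply {N₁ N₂ n : ℕ} (A : Tensor3 N₁ N₂ (n + 1)) (j : Fin (n + 1)) (p q) :
    Ft A j p q = ∑ k, phi n (j * k) * ((A k p q : ℝ) : ℂ) := rfl


lemma comm3 {a b c : ℕ} (f : Fin a → Fin b → Fin c → ℂ) :
    ∑ l : Fin b, ∑ k : Fin a, ∑ i : Fin c, f k l i
      = ∑ i : Fin c, ∑ k : Fin a, ∑ l : Fin b, f k l i := by
  calc ∑ l : Fin b, ∑ k : Fin a, ∑ i : Fin c, f k l i
      = ∑ l : Fin b, ∑ i : Fin c, ∑ k : Fin a, f k l i :=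
        Finset.sum_congr rfl fun l _ => Finset.sum_comm
    _ = ∑ i : Fin c, ∑ l : Fin b, ∑ k : Fin a, f k l i := Finset.sum_comm
    _ = ∑ i : Fin c, ∑ k : Fin a, ∑ l : Fin b, f k l i :=
        Finset.sum_congr rfl fun i _ => Finset.sum_comm

lemma Ft_tProd {N₁ N₂ L n : ℕ} (A : Tensor3 N₁ N₂ (n + 1)) (B : Tensor3 N₂ L (n + 1))
    (j : Fin (n + 1)) : Ft (tProd A B) j = Ft A j * Ft B j := by
  ext p q
  rw [Matrix.mul_apply]
  simp only [Ft_apply]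
  calc ∑ k, phi n (j * k) * (((tProd A B) k p q : ℝ) : ℂ)
      = ∑ k, ∑ l, ∑ i, phi n (j * k) * ((A (k - l) p i : ℝ) : ℂ) * ((B l i q : ℝ) : ℂ) := by
        refine Finset.sum_congr rfl fun k _ => ?_
        have h1 : ((tProd A B) k p q : ℂ)
            = ∑ l, ∑ i, ((A (k - l) p i : ℝ) : ℂ) * ((B l i q : ℝ) : ℂ) := by
          rw [tProd]
          push_cast [Matrix.sum_apply, Matrix.mul_apply]
          rfl
        rw [h1, Finset.mul_sum]
        refine Finset.sum_congr rfl fun l _ => ?_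
        rw [Finset.mul_sum]
        refine Finset.sum_congr rfl fun i _ => ?_
        ring
    _ = ∑ l, ∑ k, ∑ i, phi n (j * k) * ((A (k - l) p i : ℝ) : ℂ) * ((B l i q : ℝ) : ℂ) :=
        Finset.sum_comm
    _ = ∑ l, ∑ k, ∑ i, phi n (j * k) * phi n (j * l) * ((A k p i : ℝ) : ℂ) * ((B l i q : ℝ) : ℂ) := by
        refine Finset.sum_congr rfl fun l _ => ?_
        refine (Fintype.sum_equiv (Equiv.addRight l) _ _ fun k => ?_).symm
        simp only [Equiv.coe_addRight]
        rw [add_sub_cancel_right]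
        refine Finset.sum_congr rfl fun i _ => ?_
        have h2 : phi n (j * (k + l)) = phi n (j * k) * phi n (j * l) := by
          rw [mul_add, phi_add]
        rw [h2]
    _ = ∑ i, ∑ k, ∑ l, phi n (j * k) * phi n (j * l) * ((A k p i : ℝ) : ℂ) * ((B l i q : ℝ) : ℂ) :=
        comm3 _
    _ = ∑ i, (∑ k, phi n (j * k) * ((A k p i : ℝ) : ℂ)) * (∑ l, phi n (j * l) * ((B l i q : ℝ) : ℂ)) := by
        refine Finset.sum_congr rfl fun i _ => ?_
        rw [Finset.sum_mul]
        refine Finset.sum_congr rfl fun k _ => ?_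
        rw [Finset.mul_sum]
        refine Finset.sum_congr rfl fun l _ => ?_
        ring

lemma Ft_tTranspose {N₁ N₂ n : ℕ} (A : Tensor3 N₁ N₂ (n + 1)) (j : Fin (n + 1)) :
    Ft (tTranspose A) j = (Ft A j)ᴴ := by
  ext p q
  rw [Matrix.conjTranspose_apply, Ft_apply, Ft_apply]
  rw [show star (∑ k, phi n (j * k) * ((A k q p : ℝ) : ℂ))
    = (starRingEnd ℂ) (∑ k, phi n (j * k) * ((A k q p : ℝ) : ℂ)) from rfl, map_sum]
  refine Fintype.sum_equiv (Equiv.neg _) _ _ fun k => ?_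
  simp only [Equiv.neg_apply, tTranspose, Matrix.transpose_apply]
  rw [RingHom.map_mul, phi_conj, Complex.conj_ofReal]
  rw [show -(j * -k) = j * k from by ring]

lemma Ft_id {N₀ n : ℕ} (j : Fin (n + 1)) : Ft (idTensor N₀ (n + 1)) j = 1 := by
  ext p q
  rw [Ft_apply]
  rw [Finset.sum_eq_single (0 : Fin (n + 1))]
  · have h1 : (idTensor N₀ (n + 1)) 0 = 1 := by
      simp [idTensor]
    rw [h1, mul_zero, phi_zero, one_mul]
    by_cases hpq : p = q <;> simp [Matrix.one_apply, hpq]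
  · intro k _ hk
    have hk0 : ¬ ((k : ℕ) = 0) := fun h => hk (Fin.ext h)
    simp [idTensor, hk0]
  · simp

lemma sum_phi_mul_conj {n : ℕ} (k k' : Fin (n + 1)) :
    ∑ j : Fin (n + 1), phi n (j * k) * (starRingEnd ℂ) (phi n (j * k'))
      = if k = k' then ((n + 1 : ℕ) : ℂ) else 0 := by
  have h1 : ∀ j : Fin (n + 1), phi n (j * k) * (starRingEnd ℂ) (phi n (j * k'))
      = phi n (j * (k - k')) := by
    intro j
    rw [phi_conj, ← phi_add]
    congr 1
    ring
  simp_rw [h1, sum_phi]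
  congr 1
  simp [sub_eq_zero]

lemma Ft_sum_conj {N₁ N₂ n : ℕ} (C : Tensor3 N₁ N₂ (n + 1)) (k : Fin (n + 1)) (p q) :
    ∑ j, Ft C j p q * (starRingEnd ℂ) (phi n (j * k))
      = ((n + 1 : ℕ) : ℂ) * ((C k p q : ℝ) : ℂ) := by
  simp_rw [Ft_apply, Finset.sum_mul]
  rw [Finset.sum_comm]
  have h2 : ∀ k' : Fin (n + 1),
      ∑ j, phi n (j * k') * ((C k' p q : ℝ) : ℂ) * (starRingEnd ℂ) (phi n (j * k))
        = (if k' = k then ((n + 1 : ℕ) : ℂ) else 0) * ((C k' p q : ℝ) : ℂ) := by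
    intro k'
    calc ∑ j, phi n (j * k') * ((C k' p q : ℝ) : ℂ) * (starRingEnd ℂ) (phi n (j * k))
        = ∑ j, (phi n (j * k') * (starRingEnd ℂ) (phi n (j * k))) * ((C k' p q : ℝ) : ℂ) :=
          Finset.sum_congr rfl fun j _ => by ring
      _ = (∑ j, phi n (j * k') * (starRingEnd ℂ) (phi n (j * k))) * ((C k' p q : ℝ) : ℂ) :=
          (Finset.sum_mul _ _ _).symm
      _ = _ := by rw [sum_phi_mul_conj]
  simp_rw [h2]
  rw [Finset.sum_eq_single k]
  · simp
  · intro b _ hb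
    simp [hb]
  · simp

lemma Ft_inj {N₁ N₂ n : ℕ} (A B : Tensor3 N₁ N₂ (n + 1)) (h : ∀ j, Ft A j = Ft B j) :
    A = B := by
  funext k
  ext p q
  have h3 := Ft_sum_conj A k p q
  have h4 := Ft_sum_conj B k p q
  have h5 : ((n + 1 : ℕ) : ℂ) * ((A k p q : ℝ) : ℂ) = ((n + 1 : ℕ) : ℂ) * ((B k p q : ℝ) : ℂ) := by
    rw [← h3, ← h4]
    exact Finset.sum_congr rfl fun j _ => by rw [h j]
  have hN : ((n + 1 : ℕ) : ℂ) ≠ 0 := Nat.cast_ne_zero.mpr (Nat.succ_ne_zero n)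
  have h6 := mul_left_cancel₀ hN h5
  exact_mod_cast h6

lemma Ft_conj {N₁ N₂ n : ℕ} (A : Tensor3 N₁ N₂ (n + 1)) (j : Fin (n + 1)) :
    Ft A (-j) = (Ft A j).map (starRingEnd ℂ) := by
  ext p q
  rw [Matrix.map_apply, Ft_apply, Ft_apply, map_sum]
  refine Finset.sum_congr rfl fun k _ => ?_
  rw [RingHom.map_mul, phi_conj, Complex.conj_ofReal]
  rw [show -(j * k) = -j * k from by ring]

noncomputable def invF {N₁ N₂ n : ℕ} (Y : Fin (n + 1) → Matrix (Fin N₁) (Fin N₂) ℂ) :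
    Tensor3 N₁ N₂ (n + 1) :=
  fun k => Matrix.of fun p q =>
    (((n + 1 : ℕ) : ℝ))⁻¹ * (∑ j, Y j p q * (starRingEnd ℂ) (phi n (j * k))).re

lemma invF_coe {N₁ N₂ n : ℕ} (Y : Fin (n + 1) → Matrix (Fin N₁) (Fin N₂) ℂ)
    (hsym : ∀ j, Y (-j) = (Y j).map (starRingEnd ℂ)) (k : Fin (n + 1)) (p q) :
    ((invF Y k p q : ℝ) : ℂ)
      = (((n + 1 : ℕ) : ℂ))⁻¹ * ∑ j, Y j p q * (starRingEnd ℂ) (phi n (j * k)) := by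
  set z := ∑ j, Y j p q * (starRingEnd ℂ) (phi n (j * k)) with hz
  have hreal : (starRingEnd ℂ) z = z := by
    rw [hz, map_sum]
    refine Fintype.sum_equiv (Equiv.neg _) _ _ fun j => ?_
    simp only [Equiv.neg_apply]
    rw [hsym j, Matrix.map_apply, RingHom.map_mul]
    congr 1
    rw [show -j * k = -(j * k) from by ring, ← phi_conj]
  have hre : ((z.re : ℝ) : ℂ) = z := Complex.conj_eq_iff_re.mp hreal
  show ((((n + 1 : ℕ) : ℝ))⁻¹ * z.re : ℝ) = (((n + 1 : ℕ) : ℂ))⁻¹ * z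
  push_cast
  rw [hre]

lemma Ft_invF {N₁ N₂ n : ℕ} (Y : Fin (n + 1) → Matrix (Fin N₁) (Fin N₂) ℂ)
    (hsym : ∀ j, Y (-j) = (Y j).map (starRingEnd ℂ)) (j : Fin (n + 1)) :
    Ft (invF Y) j = Y j := by
  ext p q
  rw [Ft_apply]
  have h1 : ∀ k, ((invF Y k p q : ℝ) : ℂ)
      = (((n + 1 : ℕ) : ℂ))⁻¹ * ∑ j', Y j' p q * (starRingEnd ℂ) (phi n (j' * k)) :=
    fun k => invF_coe Y hsym k p q
  simp_rw [h1]
  have hN : ((n + 1 : ℕ) : ℂ) ≠ 0 := Nat.cast_ne_zero.mpr (Nat.succ_ne_zero n)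
  calc ∑ k, phi n (j * k) * ((((n + 1 : ℕ) : ℂ))⁻¹ * ∑ j', Y j' p q * (starRingEnd ℂ) (phi n (j' * k)))
      = (((n + 1 : ℕ) : ℂ))⁻¹ * ∑ k, ∑ j', Y j' p q * (phi n (j * k) * (starRingEnd ℂ) (phi n (j' * k))) := by
        simp only [Finset.mul_sum]
        refine Finset.sum_congr rfl fun k _ => ?_
        refine Finset.sum_congr rfl fun j' _ => ?_
        ring
    _ = (((n + 1 : ℕ) : ℂ))⁻¹ * ∑ j', Y j' p q * ∑ k, phi n (k * j) * (starRingEnd ℂ) (phi n (k * j')) := by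
        congr 1
        rw [Finset.sum_comm]
        refine Finset.sum_congr rfl fun j' _ => ?_
        rw [Finset.mul_sum]
        refine Finset.sum_congr rfl fun k _ => ?_
        rw [mul_comm j k, mul_comm j' k]
    _ = Y j p q := by
        simp_rw [sum_phi_mul_conj]
        rw [Finset.sum_eq_single j]
        · rw [if_pos rfl, mul_comm (Y j p q) _, ← mul_assoc, inv_mul_cancel₀ hN, one_mul]
        · intro b _ hb
          rw [if_neg (fun h => hb h.symm), mul_zero]
        · simp

lemma invF_zero_entry {N₁ N₂ n : ℕ} (Y : Fin (n + 1) → Matrix (Fin N₁) (Fin N₂) ℂ)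
    (p q) (h0 : ∀ j, Y j p q = 0) (k : Fin (n + 1)) : invF Y k p q = 0 := by
  show (((n + 1 : ℕ) : ℝ))⁻¹ * (∑ j, Y j p q * (starRingEnd ℂ) (phi n (j * k))).re = 0
  simp [h0]

noncomputable section

/-- Selector combining a complex-matrix chooser and a real-matrix chooser into a
conjugate-symmetric family. -/
def sel {N₁ N₂ a b n : ℕ} (Xh : Fin (n + 1) → Matrix (Fin N₁) (Fin N₂) ℂ)
    (gC : Matrix (Fin N₁) (Fin N₂) ℂ → Matrix (Fin a) (Fin b) ℂ)
    (gR : Matrix (Fin N₁) (Fin N₂) ℝ → Matrix (Fin a) (Fin b) ℝ) (j : Fin (n + 1)) :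
    Matrix (Fin a) (Fin b) ℂ :=
  if (j : ℕ) < ((-j : Fin (n + 1)) : ℕ) then gC (Xh j)
  else if ((-j : Fin (n + 1)) : ℕ) < (j : ℕ) then (gC (Xh (-j))).map (starRingEnd ℂ)
  else (gR ((Xh j).map Complex.re)).map Complex.ofReal

lemma map_star_map_ofReal {a b : ℕ} (M : Matrix (Fin a) (Fin b) ℝ) :
    (M.map Complex.ofReal).map (starRingEnd ℂ) = M.map Complex.ofReal := by
  ext p q
  simp [Matrix.map_apply, Complex.conj_ofReal]

lemma map_star_map_star {a b : ℕ} (M : Matrix (Fin a) (Fin b) ℂ) :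
    (M.map (starRingEnd ℂ)).map (starRingEnd ℂ) = M := by
  ext p q
  simp [Matrix.map_apply]

lemma sel_symm {N₁ N₂ a b n : ℕ} (Xh : Fin (n + 1) → Matrix (Fin N₁) (Fin N₂) ℂ)
    (gC : Matrix (Fin N₁) (Fin N₂) ℂ → Matrix (Fin a) (Fin b) ℂ)
    (gR : Matrix (Fin N₁) (Fin N₂) ℝ → Matrix (Fin a) (Fin b) ℝ) (j : Fin (n + 1)) :
    sel Xh gC gR (-j) = (sel Xh gC gR j).map (starRingEnd ℂ) := by
  rcases lt_trichotomy ((j : ℕ)) (((-j : Fin (n + 1)) : ℕ)) with h | h | h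
  · rw [sel, sel, if_neg (by rw [neg_neg]; omega), if_pos (by rw [neg_neg]; omega),
      if_pos h, neg_neg]
  · have hj : j = -j := Fin.ext h
    rw [sel, sel, ← hj, if_neg (by omega), if_neg (by omega), if_neg (by omega),
      if_neg (by omega), map_star_map_ofReal]
  · rw [sel, sel, if_pos (show ((-j : Fin (n + 1)) : ℕ) < ((-(-j) : Fin (n + 1)) : ℕ) from by
        rw [neg_neg]; omega),
      if_neg (by omega), if_pos (by omega), map_star_map_star]

lemma map_hom_mem_unitary {a : ℕ} {R S : Type} [CommRing R] [StarRing R] [CommRing S]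
    [StarRing S] (f : R →+* S) (hf : ∀ x, f (star x) = star (f x))
    {M : Matrix (Fin a) (Fin a) R} (hM : M ∈ Matrix.unitaryGroup (Fin a) R) :
    M.map f ∈ Matrix.unitaryGroup (Fin a) S := by
  rw [Matrix.mem_unitaryGroup_iff] at hM ⊢
  have hstar : star (M.map f) = (star M).map f := by
    ext p q
    simp [Matrix.conjTranspose_apply, Matrix.map_apply, hf]
  rw [hstar, ← Matrix.map_mul, hM]
  exact Matrix.map_one f (map_zero f) (map_one f)

lemma conjTranspose_map_hom {a b : ℕ} {R S : Type} [CommRing R] [StarRing R] [CommRing S]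
    [StarRing S] (f : R →+* S) (hf : ∀ x, f (star x) = star (f x))
    (M : Matrix (Fin a) (Fin b) R) : (M.map f)ᴴ = (Mᴴ).map f := by
  ext p q
  simp [Matrix.conjTranspose_apply, Matrix.map_apply, hf]

lemma star_comm_starRingEnd (x : ℂ) : (starRingEnd ℂ) (star x) = star ((starRingEnd ℂ) x) := rfl

lemma star_comm_ofReal (x : ℝ) : (Complex.ofRealHom : ℝ →+* ℂ) (star x)
    = star ((Complex.ofRealHom : ℝ →+* ℂ) x) := by
  simp [Complex.conj_ofReal]

end

theorem tSVD_exists_succ (N₁ N₂ n : ℕ) (X : Tensor3 N₁ N₂ (n + 1)) :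
    ∃ (U : Tensor3 N₁ N₁ (n + 1)) (S : Tensor3 N₁ N₂ (n + 1)) (V : Tensor3 N₂ N₂ (n + 1)),
      IsOrthogonalTensor U ∧ IsOrthogonalTensor V ∧
      (∀ k, ∀ (p : Fin N₁) (q : Fin N₂), (p : ℕ) ≠ (q : ℕ) → S k p q = 0) ∧
      X = tProd (tProd U S) (tTranspose V) := by
  classical
  -- complex and real SVD choosers
  choose uC huC vC hvC sC hsC using
    fun (A : Matrix (Fin N₁) (Fin N₂) ℂ) => svd_exists A
  choose uR huR vR hvR sR hsR using
    fun (A : Matrix (Fin N₁) (Fin N₂) ℝ) => svd_exists A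
  set Xh := Ft X with hXh
  have hXsym : ∀ j, Xh (-j) = (Xh j).map (starRingEnd ℂ) := fun j => Ft_conj X j
  set Uh := sel Xh uC uR with hUh
  set Sh := sel Xh sC sR with hSh
  set Vh := sel Xh vC vR with hVh
  -- realness in the fixed-point case
  have hfix : ∀ j : Fin (n + 1), ¬ ((j : ℕ) < ((-j : Fin (n + 1)) : ℕ)) →
      ¬ (((-j : Fin (n + 1)) : ℕ) < (j : ℕ)) →
      ((Xh j).map Complex.re).map Complex.ofReal = Xh j := by
    intro j h1 h2
    have hj : j = -j := Fin.ext (by omega)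
    have := hXsym j
    rw [← hj] at this
    ext p q
    simp only [Matrix.map_apply]
    have hentry : Xh j p q = (starRingEnd ℂ) (Xh j p q) := by
      conv_lhs => rw [this]
      simp [Matrix.map_apply]
    exact Complex.conj_eq_iff_re.mp hentry.symm
  -- unitarity
  have hUmem : ∀ j, Uh j ∈ Matrix.unitaryGroup (Fin N₁) ℂ := by
    intro j
    rw [hUh, sel]
    split_ifs with h1 h2
    · exact huC _
    · exact map_hom_mem_unitary (starRingEnd ℂ) star_comm_starRingEnd (huC _)
    · exact map_hom_mem_unitary Complex.ofRealHom star_comm_ofReal (huR _)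
  have hVmem : ∀ j, Vh j ∈ Matrix.unitaryGroup (Fin N₂) ℂ := by
    intro j
    rw [hVh, sel]
    split_ifs with h1 h2
    · exact hvC _
    · exact map_hom_mem_unitary (starRingEnd ℂ) star_comm_starRingEnd (hvC _)
    · exact map_hom_mem_unitary Complex.ofRealHom star_comm_ofReal (hvR _)
  -- diagonality
  have hSdiag : ∀ j (p : Fin N₁) (q : Fin N₂), (p : ℕ) ≠ (q : ℕ) → Sh j p q = 0 := by
    intro j p q hpq
    rw [hSh, sel]
    split_ifs with h1 h2
    · exact (hsC _).1 p q hpq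
    · simp [Matrix.map_apply, (hsC _).1 p q hpq]
    · simp [Matrix.map_apply, (hsR _).1 p q hpq]
  -- the product equation, frequency-wise
  have hprod : ∀ j, Xh j = Uh j * Sh j * (Vh j)ᴴ := by
    intro j
    rw [hUh, hSh, hVh, sel, sel, sel]
    split_ifs with h1 h2
    · exact (hsC (Xh j)).2
    · have hXj : Xh j = (Xh (-j)).map (starRingEnd ℂ) := by
        have := hXsym (-j)
        rwa [neg_neg] at this
      calc Xh j = (Xh (-j)).map (starRingEnd ℂ) := hXj
        _ = ((uC (Xh (-j)) * sC (Xh (-j)) * (vC (Xh (-j)))ᴴ).map (starRingEnd ℂ)) := by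
            rw [← (hsC (Xh (-j))).2]
        _ = _ := by
            rw [Matrix.map_mul, Matrix.map_mul,
              conjTranspose_map_hom (starRingEnd ℂ) star_comm_starRingEnd]
    · have hre := hfix j h1 h2
      have heq := (hsR ((Xh j).map Complex.re)).2
      calc Xh j = (((Xh j).map Complex.re).map Complex.ofReal) := hre.symm
        _ = ((uR ((Xh j).map Complex.re) * sR ((Xh j).map Complex.re)
              * (vR ((Xh j).map Complex.re))ᴴ).map Complex.ofReal) := by rw [← heq]
        _ = _ := by
            have hkey : (uR ((Xh j).map Complex.re) * sR ((Xh j).map Complex.re)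
                  * (vR ((Xh j).map Complex.re))ᴴ).map (Complex.ofRealHom : ℝ →+* ℂ)
                = (uR ((Xh j).map Complex.re)).map Complex.ofRealHom
                  * (sR ((Xh j).map Complex.re)).map Complex.ofRealHom
                  * ((vR ((Xh j).map Complex.re)).map Complex.ofRealHom)ᴴ := by
              rw [Matrix.map_mul, Matrix.map_mul,
                conjTranspose_map_hom Complex.ofRealHom star_comm_ofReal]
            exact hkey
  -- assemble
  have hUsym := fun j => sel_symm Xh uC uR j
  have hSsym := fun j => sel_symm Xh sC sR j
  have hVsym := fun j => sel_symm Xh vC vR j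
  refine ⟨invF Uh, invF Sh, invF Vh, ?_, ?_, ?_, ?_⟩
  · constructor
    · apply Ft_inj
      intro j
      rw [Ft_tProd, Ft_tTranspose, Ft_invF Uh hUsym, Ft_id]
      have := Matrix.mem_unitaryGroup_iff'.mp (hUmem j)
      rwa [Matrix.star_eq_conjTranspose] at this
    · apply Ft_inj
      intro j
      rw [Ft_tProd, Ft_tTranspose, Ft_invF Uh hUsym, Ft_id]
      have := Matrix.mem_unitaryGroup_iff.mp (hUmem j)
      rwa [Matrix.star_eq_conjTranspose] at this
  · constructor
    · apply Ft_inj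
      intro j
      rw [Ft_tProd, Ft_tTranspose, Ft_invF Vh hVsym, Ft_id]
      have := Matrix.mem_unitaryGroup_iff'.mp (hVmem j)
      rwa [Matrix.star_eq_conjTranspose] at this
    · apply Ft_inj
      intro j
      rw [Ft_tProd, Ft_tTranspose, Ft_invF Vh hVsym, Ft_id]
      have := Matrix.mem_unitaryGroup_iff.mp (hVmem j)
      rwa [Matrix.star_eq_conjTranspose] at this
  · intro k p q hpq
    exact invF_zero_entry Sh p q (fun j => hSdiag j p q hpq) k
  · apply Ft_inj
    intro j
    rw [Ft_tProd, Ft_tProd, Ft_tTranspose, Ft_invF Uh hUsym, Ft_invF Sh hSsym,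
      Ft_invF Vh hVsym]
    exact hprod j

end TSVDaux

/-- **Existence of the t-SVD:** every third-order tensor `𝒳` factors as
`𝒳 = 𝒰 * 𝒮 * 𝒱ᵀ` with `𝒰, 𝒱` orthogonal and `𝒮` f-diagonal. -/
theorem tSVD_exists (N₁ N₂ N₃ : ℕ) (X : Tensor3 N₁ N₂ N₃) :
    ∃ (U : Tensor3 N₁ N₁ N₃) (S : Tensor3 N₁ N₂ N₃) (V : Tensor3 N₂ N₂ N₃),
      IsOrthogonalTensor U ∧ IsOrthogonalTensor V ∧
      (∀ k, ∀ (p : Fin N₁) (q : Fin N₂), (p : ℕ) ≠ (q : ℕ) → S k p q = 0) ∧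
      X = tProd (tProd U S) (tTranspose V) := by
  cases N₃ with
  | zero =>
    refine ⟨idTensor N₁ 0, (fun k => k.elim0), idTensor N₂ 0, ?_, ?_, ?_, ?_⟩
    · exact ⟨funext fun k => k.elim0, funext fun k => k.elim0⟩
    · exact ⟨funext fun k => k.elim0, funext fun k => k.elim0⟩
    · exact fun k => k.elim0
    · exact funext fun k => k.elim0
  | succ n => exact TSVDaux.tSVD_exists_succ N₁ N₂ n X
end

section
/- For any m×n matrix Z and γ > 0, the Gamma quasi-norm ‖Z‖_γ = Σᵢ (1+γ)σᵢ(Z)/(γ+σᵢ(Z)) satisfies 0 ≤ ‖Z‖_γ < (1+γ)·min(m,n), ‖Z‖_γ = 0 iff Z = 0, and ‖Z‖_γ → rank(Z) as γ → 0⁺. -/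
open Matrix Filter

/-- The singular values of a real `m × n` matrix `Z` (indexed by `Fin n`, including
zeros): the square roots of the eigenvalues of `Zᵀ Z`. -/
noncomputable def singularValue {m n : ℕ} (Z : Matrix (Fin m) (Fin n) ℝ) (i : Fin n) : ℝ :=
  Real.sqrt ((Matrix.isHermitian_conjTranspose_mul_self Z).eigenvalues i)

/-- The Gamma quasi-norm `‖Z‖_γ = Σᵢ (1+γ)σᵢ(Z)/(γ+σᵢ(Z))`, summed over the singular
values of `Z` (the terms with `σᵢ = 0` vanish, so summing over all `n` indices agrees
with the sum over the `min(m,n)` singular values). -/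
noncomputable def gammaNorm {m n : ℕ} (Z : Matrix (Fin m) (Fin n) ℝ) (γ : ℝ) : ℝ :=
  ∑ i : Fin n, ((1 + γ) * singularValue Z i) / (γ + singularValue Z i)

lemma sv_nonneg {m n : ℕ} (Z : Matrix (Fin m) (Fin n) ℝ) (i : Fin n) :
    0 ≤ singularValue Z i := Real.sqrt_nonneg _

lemma sv_eq_zero_iff {m n : ℕ} (Z : Matrix (Fin m) (Fin n) ℝ) (i : Fin n) :
    singularValue Z i = 0 ↔ (Matrix.isHermitian_conjTranspose_mul_self Z).eigenvalues i = 0 := by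
  unfold singularValue
  rw [Real.sqrt_eq_zero (Matrix.eigenvalues_conjTranspose_mul_self_nonneg Z i)]

lemma card_nonzero_sv {m n : ℕ} (Z : Matrix (Fin m) (Fin n) ℝ) :
    Fintype.card {i // singularValue Z i ≠ 0} = Z.rank := by
  rw [← Matrix.rank_conjTranspose_mul_self Z,
    (Matrix.isHermitian_conjTranspose_mul_self Z).rank_eq_card_non_zero_eigs]
  exact Fintype.card_congr
    (Equiv.subtypeEquivRight fun i => by rw [not_iff_not, sv_eq_zero_iff])

lemma sv_all_zero_iff {m n : ℕ} (Z : Matrix (Fin m) (Fin n) ℝ) :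
    (∀ i, singularValue Z i = 0) ↔ Z = 0 := by
  constructor
  · intro h
    have h0 : Zᴴ * Z = 0 := by
      have hs := (Matrix.isHermitian_conjTranspose_mul_self Z).spectral_theorem
      have hd : Matrix.diagonal (RCLike.ofReal ∘
          (Matrix.isHermitian_conjTranspose_mul_self Z).eigenvalues) = (0 : Matrix (Fin n) (Fin n) ℝ) := by
        have : (RCLike.ofReal ∘ (Matrix.isHermitian_conjTranspose_mul_self Z).eigenvalues)
            = (0 : Fin n → ℝ) := by
          funext i
          simpa using (sv_eq_zero_iff Z i).mp (h i)
        rw [this]; exact Matrix.diagonal_zero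
      rw [hs, hd, map_zero]
    exact Matrix.conjTranspose_mul_self_eq_zero.mp h0
  · rintro rfl i
    by_contra hne
    have hc : Fintype.card {i // singularValue (0 : Matrix (Fin m) (Fin n) ℝ) i ≠ 0} = 0 := by
      rw [card_nonzero_sv, Matrix.rank_zero]
    exact (Fintype.card_eq_zero_iff.mp hc).elim ⟨i, hne⟩

/-- **Properties of the Gamma quasi-norm:** for `Z ∈ ℝ^{m×n}` and `γ > 0`,
`0 ≤ ‖Z‖_γ < (1+γ)·min(m,n)`, `‖Z‖_γ = 0 ↔ Z = 0`, and `‖Z‖_γ → rank Z` as `γ → 0⁺`. -/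
theorem gammaNorm_properties (m n : ℕ) (hm : 0 < m) (hn : 0 < n)
    (Z : Matrix (Fin m) (Fin n) ℝ) (γ : ℝ) (hγ : 0 < γ) :
    0 ≤ gammaNorm Z γ ∧
    gammaNorm Z γ < (1 + γ) * (min m n : ℝ) ∧
    (gammaNorm Z γ = 0 ↔ Z = 0) ∧
    Tendsto (fun g => gammaNorm Z g) (nhdsWithin 0 (Set.Ioi 0)) (nhds (Z.rank : ℝ)) := by
  have hσ : ∀ i, 0 ≤ singularValue Z i := sv_nonneg Z
  have hterm_nonneg : ∀ i ∈ Finset.univ, 0 ≤ ((1 + γ) * singularValue Z i) / (γ + singularValue Z i) :=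
    fun i _ => div_nonneg (mul_nonneg (by linarith) (hσ i)) (by linarith [hσ i])
  have h1γ : (0:ℝ) < 1 + γ := by linarith
  classical
  set S : Finset (Fin n) := Finset.univ.filter (fun i => singularValue Z i ≠ 0) with hS
  have hScard : (S.card : ℕ) = Z.rank := by
    rw [hS, ← card_nonzero_sv Z]
    exact (Fintype.card_subtype _).symm
  have hrank_le : Z.rank ≤ min m n := by
    refine le_min ?_ ?_
    · exact (Matrix.rank_le_card_height Z).trans (Fintype.card_fin m).le
    · exact (Matrix.rank_le_card_width Z).trans (Fintype.card_fin n).le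
  have hsum_eq : gammaNorm Z γ = ∑ i ∈ S, ((1 + γ) * singularValue Z i) / (γ + singularValue Z i) := by
    unfold gammaNorm
    refine (Finset.sum_subset S.subset_univ fun i _ hi => ?_).symm
    have : singularValue Z i = 0 := by
      by_contra h; exact hi (Finset.mem_filter.mpr ⟨Finset.mem_univ i, h⟩)
    simp [this]
  have hmin1 : (1:ℝ) ≤ (min m n : ℝ) := by
    have : 1 ≤ min m n := le_min hm hn
    exact_mod_cast this
  refine ⟨Finset.sum_nonneg hterm_nonneg, ?_, ?_, ?_⟩
  · -- upper bound
    rcases S.eq_empty_or_nonempty with hE | hne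
    · rw [hsum_eq, hE, Finset.sum_empty]
      nlinarith
    · have hlt : gammaNorm Z γ < ∑ _i ∈ S, (1 + γ) := by
        rw [hsum_eq]
        refine Finset.sum_lt_sum_of_nonempty hne fun i hi => ?_
        have hσi : 0 < singularValue Z i :=
          lt_of_le_of_ne (hσ i) (Ne.symm (Finset.mem_filter.mp hi).2)
        rw [div_lt_iff₀ (by linarith)]
        nlinarith
      have : (∑ _i ∈ S, ((1:ℝ) + γ)) = (1 + γ) * S.card := by
        rw [Finset.sum_const, nsmul_eq_mul, mul_comm]
      rw [this] at hlt
      refine hlt.trans_le ?_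
      have : (S.card : ℝ) ≤ (min m n : ℝ) := by
        exact_mod_cast hScard ▸ hrank_le
      nlinarith
  · -- zero iff
    constructor
    · intro h0
      rw [← sv_all_zero_iff Z]
      intro i
      have := (Finset.sum_eq_zero_iff_of_nonneg hterm_nonneg).mp h0 i (Finset.mem_univ i)
      have hden : γ + singularValue Z i ≠ 0 := by linarith [hσ i]
      have hnum : (1 + γ) * singularValue Z i = 0 := by
        field_simp at this; simpa using this
      rcases mul_eq_zero.mp hnum with h | h
      · linarith
      · exact h
    · intro h
      have hz := (sv_all_zero_iff Z).mpr h
      unfold gammaNorm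
      refine Finset.sum_eq_zero fun i _ => by simp [hz i]
  · -- limit
    have hrank_eq : (Z.rank : ℝ) =
        ∑ i : Fin n, (if singularValue Z i ≠ 0 then (1:ℝ) else 0) := by
      rw [Finset.sum_boole, ← hScard]
    rw [hrank_eq]
    unfold gammaNorm
    refine tendsto_finset_sum _ fun i _ => ?_
    by_cases h : singularValue Z i = 0
    · have : (fun g : ℝ => ((1 + g) * singularValue Z i) / (g + singularValue Z i))
          = fun _ => (0:ℝ) := by
        funext g; simp [h]
      rw [this, if_neg (by simp [h])]
      exact tendsto_const_nhds
    · have hσi : 0 < singularValue Z i := lt_of_le_of_ne (hσ i) (Ne.symm h)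
      have hg : Tendsto (fun g : ℝ => g) (nhdsWithin 0 (Set.Ioi 0)) (nhds 0) :=
        tendsto_id.mono_left nhdsWithin_le_nhds
      have h1 : Tendsto (fun g : ℝ => (1 + g) * singularValue Z i)
          (nhdsWithin 0 (Set.Ioi 0)) (nhds ((1 + 0) * singularValue Z i)) :=
        (tendsto_const_nhds.add hg).mul tendsto_const_nhds
      have h2 : Tendsto (fun g : ℝ => g + singularValue Z i)
          (nhdsWithin 0 (Set.Ioi 0)) (nhds (0 + singularValue Z i)) :=
        hg.add tendsto_const_nhds
      have := h1.div h2 (by rw [zero_add]; exact ne_of_gt hσi)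
      rw [if_pos h]
      convert this using 2
      · rfl
      · rw [zero_add, add_zero, one_mul, div_self (ne_of_gt hσi)]
end
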